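/- arXiv:2307.12311 — 4 statements merged into one kernel-verified Lean document; each statement's English description precedes it below -/
import Mathlib

section
/- For all real x ≥ 1242, the inequality (1 − √3/2)·log x ≥ 1 − √3/2 + (√3/2)·log(2/√3) + (log x)^{-1/2} + (√3/2)·(log(2x/√3))^{-1/2} holds. -/
set_option maxHeartbeats 2000000 in
set_option exponentiation.threshold 200000 in
theorem stmt_5 (x : ℝ) (hx : 1242 ≤ x) :
    (1 - Real.sqrt 3 / 2) * Real.log x ≥
      1 - Real.sqrt 3 / 2 + (Real.sqrt 3 / 2) * Real.log (2 / Real.sqrt 3)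
        + (Real.log x) ^ (-(1/2 : ℝ))
        + (Real.sqrt 3 / 2) * (Real.log (2 * x / Real.sqrt 3)) ^ (-(1/2 : ℝ)) := by
  have hx0 : (0:ℝ) < x := by linarith
  have h3sq : Real.sqrt 3 ^ 2 = 3 := Real.sq_sqrt (by norm_num)
  have h3nn : (0:ℝ) ≤ Real.sqrt 3 := Real.sqrt_nonneg 3
  have h3l : (1.732050807:ℝ) ≤ Real.sqrt 3 := by nlinarith
  have h3u : Real.sqrt 3 ≤ 1.732050809 := by nlinarith
  have h3pos : (0:ℝ) < Real.sqrt 3 := by linarith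
  have hl2l : (0.6931471803:ℝ) < Real.log 2 := Real.log_two_gt_d9
  have hl2u : Real.log 2 < 0.6931471808 := Real.log_two_lt_d9
  -- bounds on log 3
  have hl3u : Real.log 3 ≤ 1.5850 * Real.log 2 := by
    have hp : ((3:ℝ))^(10000:ℕ) ≤ (2:ℝ)^(15850:ℕ) := by
      have : (3:ℕ)^10000 ≤ 2^15850 := by norm_num
      calc ((3:ℝ))^(10000:ℕ) = ((3^10000 : ℕ) : ℝ) := by push_cast; ring
        _ ≤ ((2^15850 : ℕ) : ℝ) := by exact_mod_cast this
        _ = (2:ℝ)^(15850:ℕ) := by push_cast; ring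
    have h := Real.log_le_log (by positivity) hp
    rw [Real.log_pow, Real.log_pow] at h
    push_cast at h
    linarith
  have hl3l : 1.5849 * Real.log 2 ≤ Real.log 3 := by
    have hp : ((2:ℝ))^(15849:ℕ) ≤ (3:ℝ)^(10000:ℕ) := by
      have : (2:ℕ)^15849 ≤ 3^10000 := by norm_num
      calc ((2:ℝ))^(15849:ℕ) = ((2^15849 : ℕ) : ℝ) := by push_cast; ring
        _ ≤ ((3^10000 : ℕ) : ℝ) := by exact_mod_cast this
        _ = (3:ℝ)^(10000:ℕ) := by push_cast; ring
    have h := Real.log_le_log (by positivity) hp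
    rw [Real.log_pow, Real.log_pow] at h
    push_cast at h
    linarith
  -- lower bound on log x
  have ht : (7.124443:ℝ) ≤ Real.log x := by
    have h1242 : (10.2784:ℝ) * Real.log 2 ≤ Real.log 1242 := by
      have hp : ((2:ℝ))^(102784:ℕ) ≤ (1242:ℝ)^(10000:ℕ) := by
        have : (2:ℕ)^102784 ≤ 1242^10000 := by norm_num
        calc ((2:ℝ))^(102784:ℕ) = ((2^102784 : ℕ) : ℝ) := by push_cast; ring
          _ ≤ ((1242^10000 : ℕ) : ℝ) := by exact_mod_cast this
          _ = (1242:ℝ)^(10000:ℕ) := by push_cast; ring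
      have h := Real.log_le_log (by positivity) hp
      rw [Real.log_pow, Real.log_pow] at h
      push_cast at h
      linarith
    have hmono : Real.log 1242 ≤ Real.log x := Real.log_le_log (by norm_num) hx
    nlinarith
  have ht0 : (0:ℝ) < Real.log x := by linarith
  -- first rpow term
  have hA : (Real.log x) ^ (-(1/2 : ℝ)) ≤ 1 / 2.66915 := by
    rw [Real.rpow_neg ht0.le, ← Real.sqrt_eq_rpow]
    have hs : (2.66915:ℝ) ≤ Real.sqrt (Real.log x) := by
      have h1 : Real.sqrt (Real.log x) ^ 2 = Real.log x := Real.sq_sqrt ht0.le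
      nlinarith [Real.sqrt_nonneg (Real.log x)]
    rw [inv_eq_one_div]
    exact one_div_le_one_div_of_le (by norm_num) hs
  -- bounds on D := log (2 / sqrt 3)
  have hD : Real.log (2 / Real.sqrt 3) = Real.log 2 - Real.log 3 / 2 := by
    rw [Real.log_div (by norm_num) (ne_of_gt h3pos), Real.log_sqrt (by norm_num)]
  have hDl : (0.2075:ℝ) * 0.6931471803 ≤ Real.log (2 / Real.sqrt 3) := by
    rw [hD]; nlinarith
  have hDu : Real.log (2 / Real.sqrt 3) ≤ 0.20755 * 0.6931471808 := by
    rw [hD]; nlinarith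
  -- T := log (2 * x / sqrt 3)
  have hT : Real.log (2 * x / Real.sqrt 3)
      = Real.log x + (Real.log 2 - Real.log 3 / 2) := by
    rw [Real.log_div (by positivity) (ne_of_gt h3pos),
      Real.log_mul (by norm_num) (ne_of_gt hx0), Real.log_sqrt (by norm_num)]
    ring
  have hTl : (7.268200:ℝ) ≤ Real.log (2 * x / Real.sqrt 3) := by
    rw [hT]; nlinarith
  have hT0 : (0:ℝ) < Real.log (2 * x / Real.sqrt 3) := by linarith
  have hB : (Real.log (2 * x / Real.sqrt 3)) ^ (-(1/2 : ℝ)) ≤ 1 / 2.69596 := by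
    rw [Real.rpow_neg hT0.le, ← Real.sqrt_eq_rpow]
    have hs : (2.69596:ℝ) ≤ Real.sqrt (Real.log (2 * x / Real.sqrt 3)) := by
      have h1 : Real.sqrt (Real.log (2 * x / Real.sqrt 3)) ^ 2
          = Real.log (2 * x / Real.sqrt 3) := Real.sq_sqrt hT0.le
      nlinarith [Real.sqrt_nonneg (Real.log (2 * x / Real.sqrt 3))]
    rw [inv_eq_one_div]
    exact one_div_le_one_div_of_le (by norm_num) hs
  have hBnn : (0:ℝ) ≤ (Real.log (2 * x / Real.sqrt 3)) ^ (-(1/2 : ℝ)) :=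
    Real.rpow_nonneg hT0.le _
  -- product bounds
  have h1 : (0.1339745955:ℝ) * 7.124443 ≤ (1 - Real.sqrt 3 / 2) * Real.log x := by
    have hc : (0.1339745955:ℝ) ≤ 1 - Real.sqrt 3 / 2 := by linarith
    nlinarith
  have h2 : (Real.sqrt 3 / 2) * Real.log (2 / Real.sqrt 3)
      ≤ 0.8660254045 * (0.20755 * 0.6931471808) := by
    have hc : Real.sqrt 3 / 2 ≤ 0.8660254045 := by linarith
    nlinarith
  have h5 : (Real.sqrt 3 / 2) * (Real.log (2 * x / Real.sqrt 3)) ^ (-(1/2 : ℝ))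
      ≤ 0.8660254045 * (1 / 2.69596) := by
    have hc : Real.sqrt 3 / 2 ≤ 0.8660254045 := by linarith
    nlinarith
  have hcu : 1 - Real.sqrt 3 / 2 ≤ 1 - 1.732050807 / 2 := by linarith
  rw [ge_iff_le]
  have hfin : (1:ℝ) - 1.732050807 / 2 + 0.8660254045 * (0.20755 * 0.6931471808)
      + 1 / 2.66915 + 0.8660254045 * (1 / 2.69596)
      ≤ 0.1339745955 * 7.124443 := by norm_num
  linarith
end

section
/- Let m₁ and m₂ be positive integers with (3/2)·m₁ ≤ m₂ < 2·m₁, and suppose A ⊆ {0,1,...,m₁−1} is such that every residue class mod m₁ has at least one and at most r representations as a+b with a,b ∈ A. Let r' = m₂ − m₁ and B = A ∪ {a + r' : a ∈ A} ⊆ {0,...,m₂−1}. Then every residue class mod m₂ has at least one representation as b₁+b₂ with b₁,b₂ ∈ B. -/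
theorem stmt_6 (m₁ m₂ r : ℕ) (hm₁ : 0 < m₁) (h1 : 3 * m₁ ≤ 2 * m₂) (h2 : m₂ < 2 * m₁)
    (A : Finset ℕ) (hA : A ⊆ Finset.range m₁)
    (hrep : ∀ n : ℕ,
      1 ≤ ((A ×ˢ A).filter (fun p => (p.1 + p.2) % m₁ = n % m₁)).card ∧
      ((A ×ˢ A).filter (fun p => (p.1 + p.2) % m₁ = n % m₁)).card ≤ r) :
    ∀ n : ℕ, ∃ b₁ ∈ A ∪ A.image (fun a => a + (m₂ - m₁)),
      ∃ b₂ ∈ A ∪ A.image (fun a => a + (m₂ - m₁)),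
        (b₁ + b₂) % m₂ = n % m₂ := by
  have key : ∀ k : ℕ, ∃ a ∈ A, ∃ b ∈ A, (a + b) % m₁ = k % m₁ := by
    intro k
    obtain ⟨p, hp⟩ := Finset.card_pos.mp ((hrep k).1)
    rw [Finset.mem_filter, Finset.mem_product] at hp
    exact ⟨p.1, hp.1.1, p.2, hp.1.2, hp.2⟩
  have split : ∀ s t : ℕ, s % m₁ = t → s < 2 * m₁ → s = t ∨ s = t + m₁ := by
    intro s t hst hs
    have hd := Nat.div_add_mod s m₁
    have hq : s / m₁ < 2 := Nat.div_lt_of_lt_mul (by omega)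
    obtain ⟨q, hqe⟩ : ∃ q : ℕ, s / m₁ = q := ⟨_, rfl⟩
    rw [hqe] at hq hd
    have h0 : q = 0 ∨ q = 1 := by omega
    rcases h0 with h | h
    · rw [h, Nat.mul_zero] at hd; omega
    · rw [h, Nat.mul_one] at hd; omega
  intro n
  set n' := n % m₂ with hn'
  have hn'lt : n' < m₂ := Nat.mod_lt _ (by omega)
  have hmm : n' % m₂ = n % m₂ := by rw [hn', Nat.mod_mod_of_dvd _ dvd_rfl]
  by_cases hc : n' < m₁
  · obtain ⟨a, ha, b, hb, hab⟩ := key n'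
    have ha1 : a < m₁ := Finset.mem_range.mp (hA ha)
    have hb1 : b < m₁ := Finset.mem_range.mp (hA hb)
    have hab' : (a + b) % m₁ = n' := by rw [hab, Nat.mod_eq_of_lt hc]
    rcases split (a + b) n' hab' (by omega) with h | h
    · exact ⟨a, Finset.mem_union_left _ ha, b, Finset.mem_union_left _ hb, by
        rw [h, Nat.mod_eq_of_lt hn'lt, hn']⟩
    · refine ⟨a + (m₂ - m₁), Finset.mem_union_right _ (Finset.mem_image.mpr ⟨a, ha, rfl⟩),
        b, Finset.mem_union_left _ hb, ?_⟩
      have : a + (m₂ - m₁) + b = n' + m₂ := by omega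
      rw [this, Nat.add_mod_right, Nat.mod_eq_of_lt hn'lt, hn']
  · -- m₁ ≤ n' < m₂
    have hv : n' + 2 * m₁ - m₂ < 2 * m₁ := by omega
    set v := n' + 2 * m₁ - m₂ with hvd
    have hv1 : m₁ < v := by omega
    obtain ⟨a, ha, b, hb, hab⟩ := key v
    have ha1 : a < m₁ := Finset.mem_range.mp (hA ha)
    have hb1 : b < m₁ := Finset.mem_range.mp (hA hb)
    have hab' : (a + b) % m₁ = v - m₁ := by
      rw [hab]
      have : v % m₁ = (v - m₁) % m₁ := by
        conv_lhs => rw [show v = v - m₁ + m₁ by omega]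
        rw [Nat.add_mod_right]
      rw [this, Nat.mod_eq_of_lt (by omega)]
    rcases split (a + b) (v - m₁) hab' (by omega) with h | h
    · refine ⟨a + (m₂ - m₁), Finset.mem_union_right _ (Finset.mem_image.mpr ⟨a, ha, rfl⟩),
        b, Finset.mem_union_left _ hb, ?_⟩
      have : a + (m₂ - m₁) + b = n' := by omega
      rw [this, Nat.mod_eq_of_lt hn'lt, hn']
    · refine ⟨a + (m₂ - m₁), Finset.mem_union_right _ (Finset.mem_image.mpr ⟨a, ha, rfl⟩),
        b + (m₂ - m₁), Finset.mem_union_right _ (Finset.mem_image.mpr ⟨b, hb, rfl⟩), ?_⟩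
      have : a + (m₂ - m₁) + (b + (m₂ - m₁)) = n' + m₂ := by omega
      rw [this, Nat.add_mod_right, Nat.mod_eq_of_lt hn'lt, hn']
end

section
/- Let R_m denote the least positive integer r such that there exists A ⊆ Z/mZ with 1 ≤ σ_A(n) ≤ r for all n ∈ Z/mZ. If m₁, m₂ are positive integers with (3/2)·m₁ ≤ m₂ < 2·m₁, then R_{m₂} ≤ 4·R_{m₁}. -/
def sigmaRep (m : ℕ) (A : Finset (ZMod m)) (n : ZMod m) : ℕ :=
  ((A ×ˢ A).filter (fun p => p.1 + p.2 = n)).card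

noncomputable def RuzsaNumber (m : ℕ) : ℕ :=
  sInf {r : ℕ | 0 < r ∧ ∃ A : Finset (ZMod m),
    ∀ n : ZMod m, 1 ≤ sigmaRep m A n ∧ sigmaRep m A n ≤ r}

/-!
Lift an optimal `A ⊆ ℤ/m₁` to `S ⊆ [0, m₁)` and put `d = m₂ - m₁`, so that `m₁ ≤ 2d` and
`d < m₁`. Then `C = S ∪ (S + d) ⊆ [0, m₂)`, reduced mod `m₂`, does the job. Writing `f`, `g`
for the representation functions of `S` and `C` in `ℤ`, the residue `n` of `ℤ/m₂` is
represented `g N + g (N + m₂)` times (`N = n.val`), and `g v ≤ f v + 2 f (v - d) + f (v - 2d)`.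
Since `f s + f (s + m₁) ≤ σ_A(s) ≤ r` for every `s` and `f` vanishes outside `[0, 2m₁ - 2]`,
a case split on `N` covers the eight resulting terms, counted with multiplicity, by four such
pairs. Conversely, the residue `N` (if `N < m₁`) or `N - d` (otherwise) of `ℤ/m₁` is
represented in `A`, and its representations give one of `n`.
-/

open Finset

section PairCount

variable {G : Type*} [AddCommGroup G] [DecidableEq G]

def pairCount (S T : Finset G) (v : G) : ℕ := #{p ∈ S ×ˢ T | p.1 + p.2 = v}

lemma sigmaRep_eq_pairCount (m : ℕ) (A : Finset (ZMod m)) (n : ZMod m) :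
    sigmaRep m A n = pairCount A A n := rfl

lemma pairCount_comm (S T : Finset G) (v : G) : pairCount S T v = pairCount T S v :=
  card_equiv (Equiv.prodComm G G) fun p => by simp [and_comm, add_comm]

lemma pairCount_mono {S S' T T' : Finset G} (hS : S ⊆ S') (hT : T ⊆ T') (v : G) :
    pairCount S T v ≤ pairCount S' T' v :=
  card_le_card (filter_subset_filter _ (product_subset_product hS hT))

lemma pairCount_union_left_le (S S' T : Finset G) (v : G) :
    pairCount (S ∪ S') T v ≤ pairCount S T v + pairCount S' T v := by
  rw [pairCount, union_product, filter_union]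
  exact card_union_le _ _

lemma pairCount_union_right_le (S T T' : Finset G) (v : G) :
    pairCount S (T ∪ T') v ≤ pairCount S T v + pairCount S T' v := by
  simpa only [pairCount_comm S] using pairCount_union_left_le T T' S v

lemma pairCount_image {α : Type*} {f g : α → G} {S T : Finset α} (hf : Set.InjOn f S)
    (hg : Set.InjOn g T) (v : G) :
    pairCount (S.image f) (T.image g) v = #{p ∈ S ×ˢ T | f p.1 + g p.2 = v} := by
  rw [pairCount, ← prodMap_image_product, filter_image, card_image_of_injOn]
  · rfl
  · exact (hf.prodMap hg).mono fun p hp => by simp_all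

lemma pairCount_image_add_right (S T : Finset G) (d v : G) :
    pairCount S (T.image (· + d)) v = pairCount S T (v - d) := by
  conv_lhs =>
    rw [← image_id (s := S), pairCount_image (Set.injOn_id _) (add_left_injective d).injOn]
  simp only [pairCount, id, eq_sub_iff_add_eq, add_assoc]

def shiftUnion (S : Finset G) (d : G) : Finset G := S ∪ S.image (· + d)

lemma pairCount_shiftUnion_le (S : Finset G) (d v : G) :
    pairCount (shiftUnion S d) (shiftUnion S d) v ≤
      pairCount S S v + 2 * pairCount S S (v - d) + pairCount S S (v - d - d) := by
  have hS'S' : pairCount (S.image (· + d)) (S.image (· + d)) v = pairCount S S (v - d - d) := by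
    rw [pairCount_image_add_right, pairCount_comm, pairCount_image_add_right]
  calc pairCount (shiftUnion S d) (shiftUnion S d) v
      ≤ pairCount S (shiftUnion S d) v + pairCount (S.image (· + d)) (shiftUnion S d) v :=
        pairCount_union_left_le _ _ _ _
    _ ≤ (pairCount S S v + pairCount S (S.image (· + d)) v) +
          (pairCount (S.image (· + d)) S v + pairCount (S.image (· + d)) (S.image (· + d)) v) :=
        add_le_add (pairCount_union_right_le _ _ _ _) (pairCount_union_right_le _ _ _ _)
    _ = pairCount S S v + 2 * pairCount S S (v - d) + pairCount S S (v - d - d) := by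
      rw [pairCount_comm (S.image (· + d)) S, pairCount_image_add_right, hS'S']
      ring

lemma pairCount_le_pairCount_shiftUnion (S : Finset G) (d v : G) :
    pairCount S S v ≤ pairCount (shiftUnion S d) (shiftUnion S d) v :=
  pairCount_mono subset_union_left subset_union_left v

lemma pairCount_sub_le_pairCount_shiftUnion (S : Finset G) (d v : G) :
    pairCount S S (v - d) ≤ pairCount (shiftUnion S d) (shiftUnion S d) v := by
  rw [← pairCount_image_add_right]
  exact pairCount_mono subset_union_left subset_union_right v

lemma pairCount_sub_sub_le_pairCount_shiftUnion (S : Finset G) (d v : G) :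
    pairCount S S (v - d - d) ≤ pairCount (shiftUnion S d) (shiftUnion S d) v := by
  rw [← pairCount_image_add_right, pairCount_comm, ← pairCount_image_add_right]
  exact pairCount_mono subset_union_right subset_union_right v

end PairCount

section IntCast

variable {m : ℕ} [NeZero m]

lemma intCast_eq_iff_of_lt_two_mul {v : ℤ} (h0 : 0 ≤ v) (hv : v < 2 * m) (n : ZMod m) :
    (v : ZMod m) = n ↔ v = n.val ∨ v = n.val + m := by
  lift v to ℕ using h0
  have hn := ZMod.val_lt n
  rw [Int.cast_natCast, ← (ZMod.val_injective m).eq_iff, ZMod.val_natCast]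
  rcases Nat.lt_or_ge v m with h | h
  · rw [Nat.mod_eq_of_lt h]; omega
  · rw [Nat.mod_eq_sub_mod h, Nat.mod_eq_of_lt (by omega)]; omega

lemma injOn_intCast {S : Finset ℤ} (hS : ∀ x ∈ S, 0 ≤ x ∧ x < m) :
    Set.InjOn ((↑) : ℤ → ZMod m) S := fun x hx y hy hxy => by
  have := (intCast_eq_iff_of_lt_two_mul (hS x hx).1 (by grind) (y : ZMod m)).1 hxy
  have := (intCast_eq_iff_of_lt_two_mul (hS y hy).1 (by grind) (y : ZMod m)).1 rfl
  grind

lemma pairCount_image_intCast {S : Finset ℤ} (hS : ∀ x ∈ S, 0 ≤ x ∧ x < m) (n : ZMod m) :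
    pairCount (S.image ((↑) : ℤ → ZMod m)) (S.image (↑)) n =
      pairCount S S n.val + pairCount S S (n.val + m) := by
  rw [pairCount_image (injOn_intCast hS) (injOn_intCast hS), pairCount, pairCount,
    ← card_union_of_disjoint, ← filter_or]
  · refine congrArg card (filter_congr fun p hp => ?_)
    rw [mem_product] at hp
    have := hS _ hp.1
    have := hS _ hp.2
    rw [← Int.cast_add, intCast_eq_iff_of_lt_two_mul (by omega) (by omega)]
  · exact disjoint_filter.2 fun p _ h1 h2 => by have := NeZero.pos m; omega

lemma pairCount_add_pairCount_add_le {S : Finset ℤ} (hS : Set.InjOn ((↑) : ℤ → ZMod m) S)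
    (s : ℤ) :
    pairCount S S s + pairCount S S (s + m) ≤
      pairCount (S.image (↑)) (S.image (↑)) (s : ZMod m) := by
  rw [pairCount_image hS hS, pairCount, pairCount, ← card_union_of_disjoint, ← filter_or]
  · refine card_le_card (monotone_filter_right _ fun p _ hp => ?_)
    rcases hp with h | h
    · rw [← Int.cast_add, h]
    · rw [← Int.cast_add, h]; simp
  · exact disjoint_filter.2 fun p _ h1 h2 => by have := NeZero.pos m; omega

def intLift (A : Finset (ZMod m)) : Finset ℤ := A.image fun a => (a.val : ℤ)

lemma mem_intLift {A : Finset (ZMod m)} {x : ℤ} (hx : x ∈ intLift A) : 0 ≤ x ∧ x < m := by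
  obtain ⟨a, -, rfl⟩ := mem_image.1 hx
  exact ⟨by positivity, by exact_mod_cast ZMod.val_lt a⟩

lemma image_intCast_intLift (A : Finset (ZMod m)) : (intLift A).image (↑) = A := by
  simp [intLift, image_image, Function.comp_def]

lemma sigmaRep_intCast_eq_pairCount_intLift (A : Finset (ZMod m)) {w : ℤ} (h0 : 0 ≤ w)
    (hw : w < m) :
    sigmaRep m A w = pairCount (intLift A) (intLift A) w +
      pairCount (intLift A) (intLift A) (w + m) := by
  rw [sigmaRep_eq_pairCount]
  conv_lhs => rw [← image_intCast_intLift A]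
  rw [pairCount_image_intCast (fun _ => mem_intLift), ZMod.val_intCast, Int.emod_eq_of_lt h0 hw]

lemma pairCount_intLift_add_le_sigmaRep (A : Finset (ZMod m)) (s : ℤ) :
    pairCount (intLift A) (intLift A) s + pairCount (intLift A) (intLift A) (s + m) ≤
      sigmaRep m A s := by
  rw [sigmaRep_eq_pairCount]
  conv_rhs => rw [← image_intCast_intLift A]
  exact pairCount_add_pairCount_add_le (injOn_intCast fun _ => mem_intLift (A := A)) s

end IntCast

lemma bounds_of_pairCount_ne_zero {S : Finset ℤ} {m v : ℤ} (hS : ∀ x ∈ S, 0 ≤ x ∧ x < m)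
    (h : pairCount S S v ≠ 0) : 0 ≤ v ∧ v ≤ 2 * m - 2 := by
  obtain ⟨p, hp⟩ := card_ne_zero.1 h
  rw [mem_filter, mem_product] at hp
  have := hS _ hp.1.1
  have := hS _ hp.1.2
  omega

section ShiftUnionBounds

variable {f g : ℤ → ℕ} {m d : ℤ}

lemma one_le_add_of_le_shift (hcover : ∀ w, 0 ≤ w → w < m → 1 ≤ f w + f (w + m))
    (h₀ : ∀ v, f v ≤ g v) (h₁ : ∀ v, f (v - d) ≤ g v) (h₂ : ∀ v, f (v - d - d) ≤ g v)
    (hdm : d ≤ m) {N : ℤ} (hN₀ : 0 ≤ N) (hN : N < m + d) : 1 ≤ g N + g (N + (m + d)) := by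
  rcases lt_or_ge N m with hNm | hNm
  · have := hcover N hN₀ hNm
    have := h₀ N
    have := h₁ (N + (m + d))
    rw [show N + (m + d) - d = N + m by ring] at this
    omega
  · have := hcover (N - d) (by omega) (by omega)
    have := h₁ N
    have := h₂ (N + (m + d))
    rw [show N + (m + d) - d - d = N - d + m by ring] at this
    omega

lemma add_le_four_mul_of_le_shift {r : ℕ} (hpair : ∀ s, f s + f (s + m) ≤ r)
    (hsupp : ∀ v, f v ≠ 0 → 0 ≤ v ∧ v ≤ 2 * m - 2)
    (hg : ∀ v, g v ≤ f v + 2 * f (v - d) + f (v - d - d)) (hdm : m ≤ 2 * d) (N : ℤ) :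
    g N + g (N + (m + d)) ≤ 4 * r := by
  have hzero : ∀ v, (v < 0 ∨ 2 * m - 2 < v) → f v = 0 := fun v hv => by
    by_contra h
    have := hsupp v h
    omega
  have := hg N
  have := hg (N + (m + d))
  rw [show N + (m + d) - d = N + m by ring, show N + m - d = N - d + m by ring] at this
  have := hpair N
  have := hpair (N - d)
  have := hpair (N + m)
  have := hpair (N - d - d)
  have := hpair (N + (m + d))
  rcases lt_or_ge N d with hNd | hNd
  · rw [hzero (N - d) (by omega), hzero (N - d - d) (by omega)] at *
    omega
  · rw [hzero (N + (m + d)) (by omega)] at *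
    rcases lt_or_ge N (m - 1) with hNm | hNm
    · rw [hzero (N - d - d) (by omega)] at *
      omega
    · rw [hzero (N + m) (by omega)] at *
      omega

end ShiftUnionBounds

lemma sigmaRep_univ (m : ℕ) [NeZero m] (n : ZMod m) : sigmaRep m univ n = m := by
  conv_rhs => rw [← ZMod.card m, ← card_univ]
  refine card_nbij' Prod.fst (fun a => (a, n - a)) ?_ ?_ ?_ ?_ <;> intro p <;> simp
  rintro rfl
  simp

lemma ruzsaNumber_spec (m : ℕ) [NeZero m] :
    0 < RuzsaNumber m ∧
      ∃ A : Finset (ZMod m), ∀ n, 1 ≤ sigmaRep m A n ∧ sigmaRep m A n ≤ RuzsaNumber m :=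
  Nat.sInf_mem (s := {r | 0 < r ∧ _})
    ⟨m, NeZero.pos m, univ, fun n => by simp [sigmaRep_univ, NeZero.one_le]⟩

lemma ruzsaNumber_le {m r : ℕ} (hr : 0 < r) (A : Finset (ZMod m))
    (hA : ∀ n, 1 ≤ sigmaRep m A n ∧ sigmaRep m A n ≤ r) : RuzsaNumber m ≤ r :=
  Nat.sInf_le ⟨hr, A, hA⟩

theorem stmt_8_general (m₁ m₂ : ℕ)
    (h1 : 3 * m₁ ≤ 2 * m₂) (h2 : m₂ < 2 * m₁) :
    RuzsaNumber m₂ ≤ 4 * RuzsaNumber m₁ := by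
  have : NeZero m₁ := ⟨by omega⟩
  have : NeZero m₂ := ⟨by omega⟩
  obtain ⟨hr, A, hA⟩ := ruzsaNumber_spec m₁
  set S := intLift A
  set d : ℤ := m₂ - m₁
  have hC : ∀ x ∈ shiftUnion S d, 0 ≤ x ∧ x < m₂ := by
    simp only [shiftUnion, mem_union, mem_image]
    rintro x (hx | ⟨y, hy, rfl⟩)
    · have := mem_intLift hx; omega
    · have := mem_intLift hy; omega
  refine ruzsaNumber_le (by omega) ((shiftUnion S d).image (↑)) fun n => ?_
  have hNm := ZMod.val_lt n
  rw [sigmaRep_eq_pairCount, pairCount_image_intCast hC, show (m₂ : ℤ) = m₁ + d by ring]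
  constructor
  · refine one_le_add_of_le_shift (fun w h0 hw => ?_)
      (pairCount_le_pairCount_shiftUnion S d) (pairCount_sub_le_pairCount_shiftUnion S d)
      (pairCount_sub_sub_le_pairCount_shiftUnion S d) (by omega) (by positivity) (by omega)
    exact sigmaRep_intCast_eq_pairCount_intLift A h0 hw ▸ (hA w).1
  · exact add_le_four_mul_of_le_shift
      (fun s => (pairCount_intLift_add_le_sigmaRep A s).trans (hA s).2)
      (fun v => bounds_of_pairCount_ne_zero fun _ => mem_intLift) (pairCount_shiftUnion_le S d)
      (by omega) _

theorem stmt_8 (m₁ m₂ : ℕ) (hm₁ : 0 < m₁) (hm₂ : 0 < m₂)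
    (h1 : 3 * m₁ ≤ 2 * m₂) (h2 : m₂ < 2 * m₁) :
    RuzsaNumber m₂ ≤ 4 * RuzsaNumber m₁ :=
  stmt_8_general m₁ m₂ h1 h2
end

section
/- Assume that for every prime p there exists A ⊆ Z/(2p²)Z with 1 ≤ σ_A(n) ≤ 48 for all n ∈ Z/(2p²)Z (Chen's theorem), that for every real x ≥ 33 there is a prime in (x, 2x/√3], and that R_{m₂} ≤ 4R_{m₁} whenever (3/2)m₁ ≤ m₂ < 2m₁, and that R_m ≤ 132 for m ≤ 4356. Then R_m ≤ 192 for every positive integer m. -/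
theorem stmt_10
    (hChen : ∀ p : ℕ, p.Prime → ∃ A : Finset (ZMod (2 * p ^ 2)),
      ∀ n : ZMod (2 * p ^ 2), 1 ≤ sigmaRep (2 * p ^ 2) A n ∧ sigmaRep (2 * p ^ 2) A n ≤ 48)
    (hprime : ∀ x : ℝ, 33 ≤ x → ∃ p : ℕ, p.Prime ∧ x < p ∧ (p : ℝ) ≤ 2 * x / Real.sqrt 3)
    (hlift : ∀ m₁ m₂ : ℕ, 0 < m₁ → 0 < m₂ → 3 * m₁ ≤ 2 * m₂ → m₂ < 2 * m₁ →
      RuzsaNumber m₂ ≤ 4 * RuzsaNumber m₁)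
    (hsmall : ∀ m : ℕ, 0 < m → m ≤ 4356 → RuzsaNumber m ≤ 132) :
    ∀ m : ℕ, 0 < m → RuzsaNumber m ≤ 192 := by
  intro m hm
  by_cases hle : m ≤ 4356
  · exact le_trans (hsmall m hm hle) (by norm_num)
  · push_neg at hle
    have hm4356 : (4356 : ℝ) ≤ (m : ℝ) := by exact_mod_cast hle.le
    have hsm : (66 : ℝ) ≤ Real.sqrt m := by
      have : Real.sqrt 4356 ≤ Real.sqrt m := Real.sqrt_le_sqrt hm4356
      rwa [show (4356 : ℝ) = 66 ^ 2 by norm_num, Real.sqrt_sq (by norm_num : (0:ℝ) ≤ 66)] at this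
    have hx : (33 : ℝ) ≤ Real.sqrt m / 2 := by linarith
    obtain ⟨p, hp, hlo, hhi⟩ := hprime _ hx
    have hsq : Real.sqrt m ^ 2 = m := Real.sq_sqrt (by positivity)
    have hsnn : (0:ℝ) ≤ Real.sqrt m := Real.sqrt_nonneg _
    have h3sq : Real.sqrt 3 ^ 2 = 3 := Real.sq_sqrt (by norm_num)
    have h3pos : (0:ℝ) < Real.sqrt 3 := Real.sqrt_pos.mpr (by norm_num)
    -- m < 4 p²
    have hm4 : m < 4 * p ^ 2 := by
      have h1 : Real.sqrt m < 2 * p := by linarith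
      have : (m : ℝ) < 4 * (p : ℝ) ^ 2 := by nlinarith
      exact_mod_cast this
    -- 3 p² ≤ m
    have h3 : 3 * p ^ 2 ≤ m := by
      have h2 : (p : ℝ) * Real.sqrt 3 ≤ Real.sqrt m := by
        rw [le_div_iff₀ h3pos] at hhi
        linarith
      have hpnn : (0:ℝ) ≤ (p:ℝ) := by positivity
      have : (3 : ℝ) * (p : ℝ) ^ 2 ≤ m := by nlinarith [mul_le_mul h2 h2 (by positivity : (0:ℝ) ≤ (p:ℝ) * Real.sqrt 3) hsnn]
      exact_mod_cast this
    have hp0 : 0 < p := hp.pos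
    have hR48 : RuzsaNumber (2 * p ^ 2) ≤ 48 := Nat.sInf_le ⟨by norm_num, hChen p hp⟩
    have hmain := hlift (2 * p ^ 2) m (by positivity) hm (by omega) (by omega)
    omega
end
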